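/- Let G be a finite soluble group. If H and U are both K-P_t-subnormal subgroups of G, then H ∩ U is K-P_t-subnormal in G. -/

import Mathlib

/-- One step of a `K`-`ℙ_t`-subnormal chain: `A ≤ B` and either `A` is normal in `B`,
or the index `|B : A|` is a prime `p` such that `p - 1` is not divisible by the
`(t+1)`-th power of any prime. -/
def KPtStep (t : ℕ) {G : Type*} [Group G] (A B : Subgroup G) : Prop :=
  A ≤ B ∧ ((A.subgroupOf B).Normal ∨
    ∃ p : ℕ, p.Prime ∧ A.relIndex B = p ∧ ∀ q : ℕ, q.Prime → ¬ q ^ (t + 1) ∣ (p - 1))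

/-- `H` is `K`-`ℙ_t`-subnormal in `G` if there is a chain
`H = H₀ ≤ H₁ ≤ ⋯ ≤ Hₙ = G` each step of which is a `KPtStep`. -/
def KPtSubnormal (t : ℕ) {G : Type*} [Group G] (H : Subgroup G) : Prop :=
  Relation.ReflTransGen (KPtStep t) H ⊤

/-!
Intersecting a chain `H = H₀ ≤ H₁ ≤ ⋯ ≤ Hₙ = G` with `U` gives a chain
`H ⊓ U ≤ H₁ ⊓ U ≤ ⋯ ≤ U`, and every step keeps its kind. A normal step stays normal. For a step
`A ≤ B` of prime index `p` and `C ≤ B`, either `|C : A ⊓ C| = p` or `⁅C, C⁆ ≤ A`, so that `A ⊓ C`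
is normal in `C`. This dichotomy is where solubility enters: modulo the core of `A`, the last
nontrivial term `M` of the derived series of `B` is abelian and complements `A`, so it is cyclic
of order `p`; it is also self-centralising, so `B / M` embeds in the abelian group `Aut M` and
`B' ≤ M`. Then either `M ≤ C`, and `C` is transitive on the cosets of `A`, or `C ⊓ M = ⊥` and
`⁅C, C⁆ ≤ C ⊓ B' = ⊥`.
-/

open Subgroup
open scoped Pointwise

theorem Group.IsSolvable.exists_normal_ne_bot_commutator_eq_bot (G : Type*) [Group G]
    [Group.IsSolvable G] [Nontrivial G] : ∃ M : Subgroup G, M.Normal ∧ M ≠ ⊥ ∧ ⁅M, M⁆ = ⊥ := by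
  classical
  have h := Group.IsSolvable.solvable (G := G)
  obtain ⟨k, hk⟩ : ∃ k, Nat.find h = k + 1 := by
    refine Nat.exists_eq_succ_of_ne_zero fun h0 => top_ne_bot (α := Subgroup G) ?_
    simpa [h0] using Nat.find_spec h
  refine ⟨derivedSeries G k, derivedSeries_normal G k, Nat.find_min h (by omega), ?_⟩
  rw [← derivedSeries_succ, ← hk]
  exact Nat.find_spec h

namespace Subgroup

variable {G : Type*} [Group G]

theorem relIndex_eq_index_of_mul_eq_univ {a c : Subgroup G}
    (h : (c : Set G) * (a : Set G) = Set.univ) : a.relIndex c = a.index := by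
  have hstab : MulAction.stabilizer c ((1 : G) : G ⧸ a) = a.subgroupOf c := by
    ext x
    change (x : G) ∈ MulAction.stabilizer G ((1 : G) : G ⧸ a) ↔ (x : G) ∈ a
    rw [MulAction.stabilizer_quotient]
  have horbit : MulAction.orbit c ((1 : G) : G ⧸ a) = Set.univ := by
    refine Set.eq_univ_of_forall fun q => QuotientGroup.induction_on q fun g => ?_
    obtain ⟨x, hx, y, hy, rfl⟩ := Set.mem_mul.mp (h ▸ Set.mem_univ g)
    exact ⟨⟨x, hx⟩, QuotientGroup.eq.mpr (by simpa using hy)⟩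
  rw [relIndex, ← hstab, MulAction.index_stabilizer, horbit, Set.ncard_univ, index]

theorem sup_eq_top_of_index_prime {a K : Subgroup G} (ha : a.index.Prime) (hK : ¬K ≤ a) :
    a ⊔ K = ⊤ := by
  have hmul := relIndex_mul_index (le_sup_left : a ≤ a ⊔ K)
  rcases ha.eq_one_or_self_of_dvd _ (index_dvd_of_le le_sup_left) with h | h
  · exact index_eq_one.mp h
  · rw [h, Nat.mul_eq_right ha.ne_zero, relIndex_eq_one] at hmul
    exact absurd (le_sup_right.trans hmul) hK

theorem normalCore_map_mk'_normalCore_eq_bot (a : Subgroup G) :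
    (a.map (QuotientGroup.mk' a.normalCore)).normalCore = ⊥ := by
  set π := QuotientGroup.mk' a.normalCore
  have hle : (a.map π).normalCore.comap π ≤ a.normalCore := by
    refine normal_le_normalCore.mpr ((comap_mono (normalCore_le _)).trans ?_)
    rw [comap_map_eq, QuotientGroup.ker_mk', sup_eq_left.mpr a.normalCore_le]
  rw [← map_comap_eq_self_of_surjective (QuotientGroup.mk'_surjective _) (a.map π).normalCore,
    map_eq_bot_iff, QuotientGroup.ker_mk']
  exact hle

theorem commutator_le_centralizer_of_isCyclic (M : Subgroup G) [M.Normal] [IsCyclic M] :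
    _root_.commutator G ≤ centralizer M := by
  let _ : CommGroup (MulAut M) := (IsCyclic.mulAutMulEquiv M).toMonoidHom.commGroupOfInjective
    (IsCyclic.mulAutMulEquiv M).injective
  refine (Abelianization.commutator_subset_ker (MulAut.conjNormal : G →* MulAut M)).trans
    fun g hg => mem_centralizer_iff.mpr fun m hm => ?_
  have hconj : g * m * g⁻¹ = m := by
    simpa using congrArg Subtype.val (DFunLike.congr_fun (MonoidHom.mem_ker.mp hg) ⟨m, hm⟩)
  exact (mul_inv_eq_iff_eq_mul.mp hconj).symm

theorem inf_eq_bot_of_le_centralizer {a M : Subgroup G} (hcore : a.normalCore = ⊥)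
    (hsup : a ⊔ M = ⊤) (X : Subgroup G) [X.Normal] (hX : M ≤ centralizer X) : a ⊓ X = ⊥ := by
  have ha : a ≤ normalizer ((a ⊓ X : Subgroup G) : Set G) :=
    (le_inf le_normalizer le_normalizer_of_normal).trans inf_normalizer_le_normalizer_inf
  have hM : M ≤ normalizer ((a ⊓ X : Subgroup G) : Set G) :=
    hX.trans ((centralizer_le inf_le_right).trans (centralizer_le_normalizer _))
  have : (a ⊓ X).Normal := normalizer_eq_top_iff.mp (top_le_iff.mp (hsup ▸ sup_le ha hM))
  exact le_bot_iff.mp (hcore ▸ normal_le_normalCore.mpr inf_le_left)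

variable [Finite G] [Group.IsSolvable G]

theorem exists_card_eq_index_mul_eq_univ_commutator_le {a : Subgroup G} (ha : a.index.Prime)
    (hcore : a.normalCore = ⊥) : ∃ M : Subgroup G, Nat.card M = a.index ∧
      (M : Set G) * (a : Set G) = Set.univ ∧ _root_.commutator G ≤ M := by
  have : Nontrivial G := by
    by_contra h
    rw [not_nontrivial_iff_subsingleton] at h
    exact ha.ne_one (index_eq_one.mpr (Subsingleton.elim _ _))
  obtain ⟨M, hMnormal, hM, hMab⟩ := Group.IsSolvable.exists_normal_ne_bot_commutator_eq_bot G
  have hMc : M ≤ centralizer M := commutator_eq_bot_iff_le_centralizer.mp hMab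
  have hsup : a ⊔ M = ⊤ :=
    sup_eq_top_of_index_prime ha fun h => hM (le_bot_iff.mp (hcore ▸ normal_le_normalCore.mpr h))
  have hmul : (M : Set G) * (a : Set G) = Set.univ := by
    rw [← normal_mul, sup_comm, hsup, coe_top]
  have hcard : Nat.card M = a.index := by
    rw [← relIndex_bot_left, ← inf_eq_bot_of_le_centralizer hcore hsup M hMc, inf_relIndex_right,
      relIndex_eq_index_of_mul_eq_univ hmul]
  have : Fact (Nat.card M).Prime := ⟨hcard ▸ ha⟩
  have : IsCyclic M := isCyclic_of_prime_card rfl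
  have hZ : centralizer M ≤ M := by
    refine (eq_of_le_of_card_ge hMc ?_).ge
    rw [hcard, ← relIndex_bot_left, ← inf_eq_bot_of_le_centralizer hcore hsup (centralizer M)
      (le_centralizer_iff.mp le_rfl), inf_relIndex_right, ← relIndex_top_right]
    exact relIndex_le_of_le_right le_top (by rw [relIndex_top_right]; exact ha.ne_zero)
  exact ⟨M, hcard, hmul, (commutator_le_centralizer_of_isCyclic M).trans hZ⟩

theorem commutator_le_or_relIndex_eq_index_of_normalCore_eq_bot {a : Subgroup G}
    (ha : a.index.Prime) (hcore : a.normalCore = ⊥) (c : Subgroup G) :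
    ⁅c, c⁆ ≤ a ∨ a.relIndex c = a.index := by
  obtain ⟨M, hcard, hmul, hcomm⟩ := exists_card_eq_index_mul_eq_univ_commutator_le ha hcore
  have : Fact (Nat.card M).Prime := ⟨hcard ▸ ha⟩
  rcases (c.subgroupOf M).eq_bot_or_eq_top_of_prime_card with h | h
  · left
    have hcM : ⁅c, c⁆ ≤ c ⊓ M :=
      le_inf (commutator_le_self c) ((commutator_mono le_top le_top).trans hcomm)
    rw [subgroupOf_eq_bot.mp h |>.eq_bot] at hcM
    exact hcM.trans bot_le
  · right
    exact relIndex_eq_index_of_mul_eq_univ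
      (Set.eq_univ_of_univ_subset (hmul ▸ Set.mul_subset_mul_right (subgroupOf_eq_top.mp h)))

theorem commutator_le_or_relIndex_eq_index {a : Subgroup G} (ha : a.index.Prime)
    (c : Subgroup G) : ⁅c, c⁆ ≤ a ∨ a.relIndex c = a.index := by
  set π := QuotientGroup.mk' a.normalCore
  have hker : π.ker ≤ a := (QuotientGroup.ker_mk' _).trans_le a.normalCore_le
  have hcomap : (a.map π).comap π = a := by rw [comap_map_eq, sup_eq_left.mpr hker]
  have hindex : (a.map π).index = a.index := index_map_eq a (QuotientGroup.mk'_surjective _) hker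
  rcases commutator_le_or_relIndex_eq_index_of_normalCore_eq_bot (hindex ▸ ha)
    (normalCore_map_mk'_normalCore_eq_bot a) (c.map π) with h | h
  · rw [← map_commutator, map_le_iff_le_comap, hcomap] at h
    exact .inl h
  · rw [← relIndex_comap, hcomap, hindex] at h
    exact .inr h

end Subgroup

section KPtStep

variable {G : Type*} [Group G] [Finite G] [Group.IsSolvable G] {t : ℕ}

theorem KPtStep.inf_of_le {A B C : Subgroup G} (h : KPtStep t A B) (hCB : C ≤ B) :
    KPtStep t (A ⊓ C) C := by
  obtain ⟨hAB, hnormal | ⟨p, hp, hindex, hpt⟩⟩ := h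
  · refine ⟨inf_le_right, .inl ?_⟩
    rw [inf_subgroupOf_right]
    exact normal_subgroupOf_of_le_normalizer (hCB.trans (le_normalizer_of_normal_subgroupOf hAB))
  have hprime : (A.relIndex B).Prime := hindex ▸ hp
  rcases commutator_le_or_relIndex_eq_index hprime (C.subgroupOf B) with h | h
  · refine ⟨inf_le_right, .inl ?_⟩
    have hCA : ⁅C, C⁆ ≤ A := by
      have := map_mono (f := B.subtype) h
      rwa [map_commutator, map_subgroupOf_eq_of_le hCB, map_subgroupOf_eq_of_le hAB] at this
    rw [normal_subgroupOf_iff_le_normalizer inf_le_right, le_normalizer_iff_commutator_le_right]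
    exact le_inf ((commutator_mono le_rfl inf_le_right).trans hCA)
      ((commutator_mono le_rfl inf_le_right).trans (commutator_le_self C))
  · refine ⟨inf_le_right, .inr ⟨p, hp, ?_, hpt⟩⟩
    rw [inf_relIndex_right, ← relIndex_subgroupOf hCB, h]
    exact hindex

theorem KPtStep.reflTransGen_inf_of_le {X Y : Subgroup G}
    (h : Relation.ReflTransGen (KPtStep t) X Y) {C : Subgroup G} (hC : C ≤ Y) :
    Relation.ReflTransGen (KPtStep t) (X ⊓ C) C := by
  induction h using Relation.ReflTransGen.head_induction_on generalizing C with
  | refl => rw [inf_eq_right.mpr hC]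
  | head hstep _ ih =>
    have hXC := hstep.inf_of_le (inf_le_left : _ ⊓ C ≤ _)
    rw [← inf_assoc, inf_eq_left.mpr hstep.1] at hXC
    exact .head hXC (ih hC)

end KPtStep

theorem stmt_8_general {G : Type*} [Group G] [Finite G] [Group.IsSolvable G] (t : ℕ)
    (H U : Subgroup G) (hH : KPtSubnormal t H) (hU : KPtSubnormal t U) :
    KPtSubnormal t (H ⊓ U) :=
  (KPtStep.reflTransGen_inf_of_le hH le_top).trans hU

theorem stmt_8 {G : Type*} [Group G] [Finite G] [Group.IsSolvable G] (t : ℕ) (ht : 1 ≤ t)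
    (H U : Subgroup G) (hH : KPtSubnormal t H) (hU : KPtSubnormal t U) :
    KPtSubnormal t (H ⊓ U) :=
  stmt_8_general t H U hH hU
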